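/- If D is a dominating set of W_{4,n} with n = 10t + 4 (t ≥ 2) and bipartition classes U, V, then |D| ≥ 2t + 2; in other words, γ(W_{4,n}) ≥ 2⌊n/10⌋ + 2 when n ≡ 4 (mod 10). -/

import Mathlib

/-- The Knödel graph `W_{Δ,n}` with `m = n/2`: bipartite graph on `U ⊕ V`,
where `u_i` (as `Sum.inl i`, indices mod `m`) is adjacent to `v_j` (`Sum.inr j`)
iff `j ≡ i + 2^k - 1 (mod m)` for some `k < Δ`. -/
def knodel (Δ m : ℕ) : SimpleGraph (ZMod m ⊕ ZMod m) where
  Adj x y := match x, y with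
    | Sum.inl i, Sum.inr j => ∃ k, k < Δ ∧ j = i + 2 ^ k - 1
    | Sum.inr j, Sum.inl i => ∃ k, k < Δ ∧ j = i + 2 ^ k - 1
    | _, _ => False
  symm := ⟨by rintro (i | i) (j | j) h <;> exact h⟩
  loopless := ⟨by rintro (i | i) h <;> exact h⟩

/-- `D` is a dominating set of `G`: every vertex not in `D` has a neighbor in `D`. -/
def IsDominatingSet {V : Type*} (G : SimpleGraph V) (D : Set V) : Prop :=
  ∀ v ∉ D, ∃ u ∈ D, G.Adj u v

/-- The domination number: minimum cardinality of a (finite) dominating set. -/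
noncomputable def dominationNumber {V : Type*} (G : SimpleGraph V) : ℕ :=
  sInf {k | ∃ D : Set V, D.Finite ∧ D.ncard = k ∧ IsDominatingSet G D}

/-- Index-distance of `u_i` and `u_j`: `min(|i-j|, m - |i-j|)`. -/
def idDist (m i j : ℕ) : ℕ :=
  min ((i : ℤ) - (j : ℤ)).natAbs (m - ((i : ℤ) - (j : ℤ)).natAbs)

/-- `M_Δ = {2^a - 2^b : 0 ≤ b < a < Δ}`. -/
def Mset (Δ : ℕ) : Set ℕ := {d | ∃ a b : ℕ, b < a ∧ a < Δ ∧ d = 2 ^ a - 2 ^ b}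

/-!
Split `D` into its parts `A ⊆ U` and `B ⊆ V`. Each side is an independent set of size `n/2 = 5t + 2`
and every vertex has degree at most `4`, so each vertex of `U \ A` is one of the at most `4|B|`
neighbours of `B`: `5t + 2 ≤ |A| + 4|B|`, and symmetrically `5t + 2 ≤ |B| + 4|A|`.
If `|A| + |B| ≤ 2t + 1`, the first inequality forces `3|B| ≥ 3t + 1`, so `|B| ≥ t + 1`, and
likewise `|A| ≥ t + 1`, a contradiction.
-/

open Finset

theorem IsDominatingSet.card_le_card_inter_add_maxDegree_mul {V : Type*} [Fintype V]
    [DecidableEq V] {G : SimpleGraph V} [DecidableRel G.Adj] {D S : Finset V}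
    (hD : IsDominatingSet G D) (hS : G.IsIndepSet S) :
    #S ≤ #(D ∩ S) + G.maxDegree * #(D \ S) := by
  have hcover : S ⊆ D ∩ S ∪ (D \ S).biUnion fun u => G.neighborFinset u := by
    intro v hv
    by_cases hvD : v ∈ D
    · exact mem_union_left _ (mem_inter.2 ⟨hvD, hv⟩)
    obtain ⟨u, huD, huv⟩ := hD v hvD
    have huS : u ∉ S := fun huS => hS huS hv huv.ne huv
    exact mem_union_right _ (mem_biUnion.2 ⟨u, mem_sdiff.2 ⟨huD, huS⟩, by simpa using huv⟩)
  calc #S ≤ #(D ∩ S ∪ (D \ S).biUnion fun u => G.neighborFinset u) := card_le_card hcover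
    _ ≤ #(D ∩ S) + #(D \ S) * G.maxDegree :=
      (card_union_le _ _).trans <| Nat.add_le_add_left
        (card_biUnion_le_card_mul _ _ _ fun u _ => G.degree_le_maxDegree u) _
    _ = #(D ∩ S) + G.maxDegree * #(D \ S) := by rw [Nat.mul_comm]

section Knodel

variable {Δ m : ℕ}

theorem knodel_isIndepSet_range_inl : (knodel Δ m).IsIndepSet (Set.range Sum.inl) := by
  rintro _ ⟨i, rfl⟩ _ ⟨j, rfl⟩ _ h
  exact h

theorem knodel_isIndepSet_range_inr : (knodel Δ m).IsIndepSet (Set.range Sum.inr) := by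
  rintro _ ⟨i, rfl⟩ _ ⟨j, rfl⟩ _ h
  exact h

theorem knodel_degree_le [NeZero m] [DecidableRel (knodel Δ m).Adj] (x : ZMod m ⊕ ZMod m) :
    (knodel Δ m).degree x ≤ Δ := by
  suffices ∃ f : ℕ → ZMod m ⊕ ZMod m, (knodel Δ m).neighborFinset x ⊆ (range Δ).image f by
    obtain ⟨f, hf⟩ := this
    rw [← SimpleGraph.card_neighborFinset_eq_degree]
    exact (card_le_card hf).trans (card_image_le.trans (card_range Δ).le)
  rcases x with i | j
  · refine ⟨fun k => Sum.inr (i + 2 ^ k - 1), ?_⟩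
    rintro (_ | j) h <;> rw [SimpleGraph.mem_neighborFinset] at h
    · exact h.elim
    · obtain ⟨k, hk, rfl⟩ := h
      exact mem_image.2 ⟨k, mem_range.2 hk, rfl⟩
  · refine ⟨fun k => Sum.inl (j - 2 ^ k + 1), ?_⟩
    rintro (i | _) h <;> rw [SimpleGraph.mem_neighborFinset] at h
    · obtain ⟨k, hk, rfl⟩ := h
      exact mem_image.2 ⟨k, mem_range.2 hk, congrArg Sum.inl (by ring)⟩
    · exact h.elim

theorem knodel_maxDegree_le [NeZero m] [DecidableRel (knodel Δ m).Adj] :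
    (knodel Δ m).maxDegree ≤ Δ :=
  SimpleGraph.maxDegree_le_of_forall_degree_le _ _ knodel_degree_le

theorem knodel_card_le_of_isDominatingSet [NeZero m] {D L : Finset (ZMod m ⊕ ZMod m)}
    (hL : (L : Set (ZMod m ⊕ ZMod m)) = Set.range Sum.inl) (hD : IsDominatingSet (knodel Δ m) D) :
    m ≤ #(D ∩ L) + Δ * #(D \ L) ∧ m ≤ #(D \ L) + Δ * #(D ∩ L) := by
  classical
  have hLcard : #L = m := by
    rw [← Set.ncard_coe_finset, hL, Set.ncard_range_of_injective Sum.inl_injective, Nat.card_zmod]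
  have hLc : #Lᶜ = m := by rw [card_compl, hLcard, Fintype.card_sum, ZMod.card]; omega
  have hLind : (knodel Δ m).IsIndepSet L := hL ▸ knodel_isIndepSet_range_inl
  have hLcind : (knodel Δ m).IsIndepSet ↑Lᶜ := by
    rw [coe_compl, hL, Set.compl_range_inl]
    exact knodel_isIndepSet_range_inr
  have hU := hD.card_le_card_inter_add_maxDegree_mul hLind
  have hV := hD.card_le_card_inter_add_maxDegree_mul hLcind
  rw [sdiff_compl, inf_eq_inter, ← sdiff_eq_inter_compl, hLc] at hV
  rw [hLcard] at hU
  constructor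
  · exact hU.trans (by gcongr; exact knodel_maxDegree_le)
  · exact hV.trans (by gcongr; exact knodel_maxDegree_le)

end Knodel

theorem domination_lower_mod4_general (t : ℕ)
    (D : Set (ZMod (5 * t + 2) ⊕ ZMod (5 * t + 2)))
    (hD : IsDominatingSet (knodel 4 (5 * t + 2)) D) :
    2 * t + 2 ≤ D.ncard := by
  classical
  rw [Set.ncard_eq_toFinset_card', ← card_inter_add_card_sdiff _ (Set.range Sum.inl).toFinset]
  rw [← Set.coe_toFinset D] at hD
  have := knodel_card_le_of_isDominatingSet (Set.coe_toFinset _) hD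
  omega

theorem domination_lower_mod4 (t : ℕ) (ht : 2 ≤ t)
    (D : Set (ZMod (5 * t + 2) ⊕ ZMod (5 * t + 2))) (hDfin : D.Finite)
    (hD : IsDominatingSet (knodel 4 (5 * t + 2)) D) :
    2 * t + 2 ≤ D.ncard :=
  domination_lower_mod4_general t D hD
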